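/- Let GST be the generalized suffix tree of the gaps-removed rows of an MSA[1..m][1..n] with distinct terminators, and let W = {w_1,...,w_k} be the set of (implicit or explicit) nodes of GST corresponding to the strings {spell(MSA[i][x..y_i]) : 1 ≤ i ≤ m}, all nonempty. Then every MSA[i][x..y_i] is semi-repeat-free for all 1 ≤ i ≤ m if and only if W covers exactly m leaves of GST. -/
import Mathlib

open List


/-- The gaps-removed string spelled by row `i` of the MSA in columns `x..y`
(0-indexed, inclusive). `none` entries are the gap symbol `-`. -/
def spell {α : Type} {m n : ℕ} (M : Fin m → Fin n → Option α) (i : Fin m) (x y : ℕ) : List α :=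
  (List.finRange n).filterMap (fun (c : Fin n) => if x ≤ (c : ℕ) ∧ (c : ℕ) ≤ y then M i c else none)

/-- The gaps-removed row `i` of the MSA. -/
def row {α : Type} {m n : ℕ} (M : Fin m → Fin n → Option α) (i : Fin m) : List α :=
  (List.finRange n).filterMap (M i)

/-- `g(i,x)`: the number of non-gap symbols of row `i` strictly before column `x`,
i.e. the position in the gaps-removed row `i` corresponding to column `x`. -/
def gOff {α : Type} {m n : ℕ} (M : Fin m → Fin n → Option α) (i : Fin m) (x : ℕ) : ℕ :=
  ((List.finRange n).filterMap (fun (c : Fin n) => if (c : ℕ) < x then M i c else none)).length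

/-- Row substring `MSA[i][x..y]` is semi-repeat-free: `spell(MSA[i][x..y])` occurs
in each gaps-removed row `i'` only at position `g(i',x)`. -/
def RowSRF {α : Type} {m n : ℕ} (M : Fin m → Fin n → Option α) (x y : ℕ) (i : Fin m) : Prop :=
  ∀ (i' : Fin m) (p : ℕ), spell M i x y <+: (row M i').drop p → p = gOff M i' x

/-- The segment `[x..y]` of the MSA is semi-repeat-free. -/
def SegSRF {α : Type} {m n : ℕ} (M : Fin m → Fin n → Option α) (x y : ℕ) : Prop :=
  ∀ (i i' : Fin m) (p : ℕ), spell M i x y <+: (row M i').drop p → p = gOff M i' x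

/-- Any sorted list of `Fin n` splits at threshold `t`. -/
lemma split_at {n : ℕ} (t : ℕ) : ∀ (l : List (Fin n)), l.Pairwise (· < ·) →
    ∃ l1 l2 : List (Fin n), l = l1 ++ l2 ∧ (∀ c ∈ l1, (c:ℕ) < t) ∧
      (∀ c ∈ l2, t ≤ (c:ℕ)) ∧ l2.Pairwise (· < ·) := by
  intro l hl
  induction l with
  | nil => exact ⟨[], [], rfl, by simp, by simp, List.Pairwise.nil⟩
  | cons a l ih =>
    rcases List.pairwise_cons.mp hl with ⟨ha, hl'⟩
    by_cases h : (a:ℕ) < t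
    · obtain ⟨l1, l2, h12, h1, h2, hp⟩ := ih hl'
      exact ⟨a :: l1, l2, by rw [h12]; rfl, by
        intro c hc; rcases List.mem_cons.mp hc with rfl | hc
        · exact h
        · exact h1 c hc, h2, hp⟩
    · refine ⟨[], a :: l, rfl, by simp, ?_, hl⟩
      intro c hc
      rcases List.mem_cons.mp hc with rfl | hc
      · omega
      · have : (a:ℕ) < (c:ℕ) := ha c hc
        omega

/-- `spell(MSA[i][x..y])` always occurs at position `g(i,x)` of its own row. -/
lemma spell_prefix {α : Type} {m n : ℕ} (M : Fin m → Fin n → Option α) (i : Fin m) (x y : ℕ) :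
    spell M i x y <+: (row M i).drop (gOff M i x) := by
  obtain ⟨T, D, hTD, hT, hD, hDp⟩ := split_at x (List.finRange n) (List.pairwise_lt_finRange n)
  obtain ⟨D1, D2, hD12, hD1, hD2, _⟩ := split_at (y+1) D hDp
  have hrow : row M i = T.filterMap (M i) ++ D.filterMap (M i) := by
    rw [row, hTD, filterMap_append]
  have hg : gOff M i x = (T.filterMap (M i)).length := by
    rw [gOff, hTD, filterMap_append]
    have h1 : T.filterMap (fun (c : Fin n) => if (c:ℕ) < x then M i c else none)
        = T.filterMap (M i) :=
      filterMap_congr fun c hc => by simp [hT c hc]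
    have h2 : D.filterMap (fun (c : Fin n) => if (c:ℕ) < x then M i c else none) = [] :=
      filterMap_eq_nil_iff.mpr fun c hc => by simp [Nat.not_lt.mpr (hD c hc)]
    rw [h1, h2, append_nil]
  have hspell : spell M i x y = D1.filterMap (M i) := by
    rw [spell, hTD, filterMap_append]
    have h1 : T.filterMap (fun (c : Fin n) => if x ≤ (c:ℕ) ∧ (c:ℕ) ≤ y then M i c else none)
        = [] :=
      filterMap_eq_nil_iff.mpr fun c hc => by
        have := hT c hc
        simp only [ite_eq_right_iff]
        intro h; omega
    have h2 : D.filterMap (fun (c : Fin n) => if x ≤ (c:ℕ) ∧ (c:ℕ) ≤ y then M i c else none)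
        = D1.filterMap (M i) := by
      rw [hD12, filterMap_append]
      have h21 : D1.filterMap (fun (c : Fin n) => if x ≤ (c:ℕ) ∧ (c:ℕ) ≤ y then M i c else none)
          = D1.filterMap (M i) :=
        filterMap_congr fun c hc => by
          have hx : x ≤ (c:ℕ) := hD c (by rw [hD12]; exact mem_append_left _ hc)
          have hy : (c:ℕ) ≤ y := by have := hD1 c hc; omega
          simp [hx, hy]
      have h22 : D2.filterMap
          (fun (c : Fin n) => if x ≤ (c:ℕ) ∧ (c:ℕ) ≤ y then M i c else none) = [] :=
        filterMap_eq_nil_iff.mpr fun c hc => by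
          have := hD2 c hc
          simp only [ite_eq_right_iff]
          intro h; omega
      rw [h21, h22, append_nil]
    rw [h1, h2, nil_append]
  rw [hrow, hg, hspell, drop_left, hD12, filterMap_append]
  exact prefix_append _ _

/-- let `W` be the set of GST nodes corresponding to the strings
`spell(MSA[i][x..y_i])` (all nonempty). Since the leaves of the generalized
suffix tree covered by the node of a string `S` correspond exactly to the pairs
`(row i', suffix position p)` such that `S` occurs at position `p` of the
gaps-removed row `i'`, the statement reads: all row substrings `MSA[i][x..y_i]`
are semi-repeat-free if and only if the set of covered leaves, i.e. the set of
pairs `(i', p)` at which some `spell(MSA[i][x..y_i])` occurs, has exactly `m`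
elements. -/
theorem gst_covers_m_leaves_iff_srf {α : Type} {m n : ℕ}
    (M : Fin m → Fin n → Option α) (x : ℕ) (y : Fin m → ℕ)
    (hne : ∀ i : Fin m, spell M i x (y i) ≠ []) :
    (∀ i : Fin m, RowSRF M x (y i) i) ↔
      {pr : Fin m × ℕ |
        ∃ i : Fin m, spell M i x (y i) <+: (row M pr.1).drop pr.2}.ncard = m := by
  classical
  set f : Fin m → Fin m × ℕ := fun i => (i, gOff M i x) with hf
  set S : Set (Fin m × ℕ) := {pr : Fin m × ℕ |
        ∃ i : Fin m, spell M i x (y i) <+: (row M pr.1).drop pr.2} with hSdef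
  have hmem : ∀ i : Fin m, f i ∈ S := fun i => ⟨i, spell_prefix M i x (y i)⟩
  have hinj : Function.Injective f := fun a b h => congrArg Prod.fst h
  have hrange : (Set.range f).ncard = m := by
    rw [← Set.image_univ, Set.ncard_image_of_injective _ hinj, Set.ncard_univ,
      Nat.card_eq_fintype_card, Fintype.card_fin]
  constructor
  · intro hsrf
    have hSeq : S = Set.range f := by
      ext ⟨i', p⟩
      constructor
      · rintro ⟨i, hp⟩
        have hq : p = gOff M i' x := hsrf i i' p hp
        exact ⟨i', by simp [hf, hq]⟩
      · rintro ⟨j, hj⟩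
        rw [← hj]; exact hmem j
    rw [hSeq, hrange]
  · intro hcard
    rcases Nat.eq_zero_or_pos m with hm | hm
    · subst hm; intro i; exact i.elim0
    intro i
    unfold RowSRF
    intro i' p hp
    have hfin : S.Finite := by
      by_contra h
      rw [Set.Infinite.ncard h] at hcard
      omega
    have hsub : Set.range f ⊆ S := by rintro _ ⟨j, rfl⟩; exact hmem j
    have hSeq : Set.range f = S :=
      Set.eq_of_subset_of_ncard_le hsub (by rw [hcard, hrange]) hfin
    have hmemS : (i', p) ∈ S := ⟨i, hp⟩
    rw [← hSeq] at hmemS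
    obtain ⟨j, hj⟩ := hmemS
    have h1 : j = i' := congrArg Prod.fst hj
    have h2 : gOff M j x = p := congrArg Prod.snd hj
    rw [← h2, h1]
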